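/- Let K be a field and O a subring of K, and let 1 ≤ m ≤ n. For Z₃ ∈ M_{m,m}(O) and Z₄ ∈ M_{m,n−m}(O), the 2m×n matrix Y = [[1ₘ,0],[Z₃,Z₄]] satisfies Yᵀ·J₂ₘ·Y = [[Z₃+Z₃ᵀ, Z₄],[Z₄ᵀ, 0]] (an n×n matrix with all entries in O). Consequently, for every g ∈ M_{2m,2m}(K) with gᵀ·J₂ₘ·g = J₂ₘ and every b ∈ Mₙ(O), the matrix X = g·Y·b satisfies Xᵀ·J₂ₘ·X ∈ Mₙ(O). -/

import Mathlib

open Matrix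

/-- Every entry of the matrix lies in the subring `O`. -/
def MemO {K : Type*} [Field K] {α β : Type*} (O : Subring K) (M : Matrix α β K) : Prop :=
  ∀ i j, M i j ∈ O

/-- The matrix `J₂ₘ = [[0,1ₘ],[1ₘ,0]]`. -/
def Jmat (K : Type*) [Field K] (m : ℕ) : Matrix (Fin m ⊕ Fin m) (Fin m ⊕ Fin m) K :=
  Matrix.fromBlocks 0 1 1 0

lemma memO_mul {K : Type*} [Field K] (O : Subring K) {α β γ : Type*} [Fintype β]
    {A : Matrix α β K} {B : Matrix β γ K} (hA : MemO O A) (hB : MemO O B) :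
    MemO O (A * B) := fun i j => by
  rw [Matrix.mul_apply]
  exact Subring.sum_mem O fun k _ => O.mul_mem (hA i k) (hB k j)

/-- The Gram-matrix computation (eq:XJX0) and the quadric-membership claim from the
proof of Theorem 2.5, Case OS0. -/
theorem gram_computation_OS0 {K : Type*} [Field K] (O : Subring K)
    (m n : ℕ) (hm : 1 ≤ m) (hmn : m ≤ n)
    (Z₃ : Matrix (Fin m) (Fin m) K) (Z₄ : Matrix (Fin m) (Fin (n - m)) K)
    (hZ₃ : MemO O Z₃) (hZ₄ : MemO O Z₄) :
    ((Matrix.fromBlocks (1 : Matrix (Fin m) (Fin m) K) 0 Z₃ Z₄)ᵀ * Jmat K m * Matrix.fromBlocks 1 0 Z₃ Z₄ =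
        Matrix.fromBlocks (Z₃ + Z₃ᵀ) Z₄ Z₄ᵀ 0) ∧
    MemO O ((Matrix.fromBlocks (1 : Matrix (Fin m) (Fin m) K) 0 Z₃ Z₄)ᵀ * Jmat K m * Matrix.fromBlocks 1 0 Z₃ Z₄) ∧
    ∀ (g : Matrix (Fin m ⊕ Fin m) (Fin m ⊕ Fin m) K)
      (b : Matrix (Fin m ⊕ Fin (n - m)) (Fin m ⊕ Fin (n - m)) K),
      gᵀ * Jmat K m * g = Jmat K m → MemO O b →
      MemO O ((g * Matrix.fromBlocks (1 : Matrix (Fin m) (Fin m) K) 0 Z₃ Z₄ * b)ᵀ * Jmat K m *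
        (g * Matrix.fromBlocks (1 : Matrix (Fin m) (Fin m) K) 0 Z₃ Z₄ * b)) := by
  have h1 : (Matrix.fromBlocks (1 : Matrix (Fin m) (Fin m) K) 0 Z₃ Z₄)ᵀ * Jmat K m *
      Matrix.fromBlocks 1 0 Z₃ Z₄ = Matrix.fromBlocks (Z₃ + Z₃ᵀ) Z₄ Z₄ᵀ 0 := by
    simp [Jmat, Matrix.fromBlocks_transpose, Matrix.fromBlocks_multiply, add_comm]
    refine (Matrix.fromBlocks_multiply _ _ _ _ _ _ _ _).trans ?_
    simp [add_comm]
  have h2 : MemO O ((Matrix.fromBlocks (1 : Matrix (Fin m) (Fin m) K) 0 Z₃ Z₄)ᵀ * Jmat K m *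
      Matrix.fromBlocks 1 0 Z₃ Z₄) := by
    rw [h1]
    rintro (i | i) (j | j) <;>
      simp only [Matrix.fromBlocks_apply₁₁, Matrix.fromBlocks_apply₁₂,
        Matrix.fromBlocks_apply₂₁, Matrix.fromBlocks_apply₂₂, Matrix.add_apply,
        Matrix.transpose_apply, Matrix.zero_apply]
    · exact O.add_mem (hZ₃ i j) (hZ₃ j i)
    · exact hZ₄ i j
    · exact hZ₄ j i
    · exact O.zero_mem
  refine ⟨h1, h2, fun g b hg hb => ?_⟩
  have key : (g * Matrix.fromBlocks (1 : Matrix (Fin m) (Fin m) K) 0 Z₃ Z₄ * b)ᵀ * Jmat K m *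
      (g * Matrix.fromBlocks (1 : Matrix (Fin m) (Fin m) K) 0 Z₃ Z₄ * b) =
      bᵀ * ((Matrix.fromBlocks (1 : Matrix (Fin m) (Fin m) K) 0 Z₃ Z₄)ᵀ * Jmat K m *
        Matrix.fromBlocks 1 0 Z₃ Z₄) * b := by
    rw [Matrix.transpose_mul, Matrix.transpose_mul]
    have : (Matrix.fromBlocks (1 : Matrix (Fin m) (Fin m) K) 0 Z₃ Z₄)ᵀ * (gᵀ * Jmat K m * g) *
        Matrix.fromBlocks 1 0 Z₃ Z₄ = (Matrix.fromBlocks (1 : Matrix (Fin m) (Fin m) K) 0 Z₃ Z₄)ᵀ *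
        Jmat K m * Matrix.fromBlocks 1 0 Z₃ Z₄ := by rw [hg]
    refine Eq.trans ?_ (congrArg (fun X => bᵀ * X * b) this)
    have e : ∀ F : Matrix (Fin m ⊕ Fin m) (Fin m ⊕ Fin (n - m)) K, bᵀ * (Fᵀ * gᵀ) * Jmat K m * (g * F * b) =
        bᵀ * (Fᵀ * (gᵀ * Jmat K m * g) * F) * b := fun F => by simp only [Matrix.mul_assoc]
    exact e _
  rw [key]
  exact memO_mul O (memO_mul O (fun i j => hb j i) h2) hb
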